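/- Crossover pruning: if a transition point t lies in the filtering space H(r, Q) of a route point r, and the crossover route set C(r) (routes containing r) has |C(r)| ≥ k, then at least k routes are strictly closer to t than Q, hence Q ∉ kNN(t). -/
import Mathlib


open Classical

abbrev Pt := EuclideanSpace ℝ (Fin 2)

noncomputable def pdist (t : Pt) (S : Finset Pt) : ℝ :=
  sInf ((fun s => dist t s) '' ↑S)

lemma pdist_le (t s : Pt) {S : Finset Pt} (h : s ∈ S) : pdist t S ≤ dist t s := by
  apply csInf_le
  · exact (S.finite_toSet.image _).bddBelow
  · exact ⟨s, h, rfl⟩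

lemma pdist_mem (t : Pt) {S : Finset Pt} (h : S.Nonempty) :
    ∃ s ∈ S, pdist t S = dist t s := by
  have hne : ((fun s => dist t s) '' ↑S).Nonempty := ⟨_, h.choose, h.choose_spec, rfl⟩
  have := hne.csInf_mem (S.finite_toSet.image (fun s => dist t s))
  obtain ⟨s, hs, hval⟩ := this
  exact ⟨s, hs, hval.symm⟩

/-- crossover pruning: if t ∈ H(r,Q) and the crossover route set
C(r) = {R ∈ D : r ∈ R} has at least k routes, then at least k routes are strictly
closer to t than Q, hence Q ∉ kNN(t). -/
theorem crossover_pruning (D : Finset (Finset Pt))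
    (hD : ∀ R ∈ D, R.Nonempty) (Q : Finset Pt) (hQ : Q.Nonempty)
    (r t : Pt) (k : ℕ)
    (ht : ∀ q ∈ Q, dist t r < dist t q)
    (hcross : k ≤ (D.filter (fun R => r ∈ R)).card) :
    ¬ ((D.filter (fun R => pdist t R < pdist t Q)).card < k) := by
  push_neg
  refine le_trans hcross (Finset.card_le_card ?_)
  intro R hR
  simp only [Finset.mem_filter] at hR ⊢
  refine ⟨hR.1, ?_⟩
  obtain ⟨q, hq, hval⟩ := pdist_mem t hQ
  calc pdist t R ≤ dist t r := pdist_le t r hR.2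
    _ < dist t q := ht q hq
    _ = pdist t Q := hval.symm
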